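/- arXiv:2505.12419 — 3 statements merged into one kernel-verified Lean document; each statement's English description precedes it below -/
import Mathlib

section
/- Let f, g₁,…,g_n : ℝ^m → ℝ and f̃, g̃₁,…,g̃_n : ℝ^l → ℝ be differentiable functions, and let T : ℝ^m → ℝ^l be a linear map. Suppose: (i) g̃_k(Tθ) = g_k(θ) for all θ and k; (ii) ∇f̃(Tθ) = T(∇f(θ)) for all θ; (iii) for each k there exists t_k > 0 such that ∇g̃_k(Tθ) = t_k·T(∇g_k(θ)) for all θ. If θ* is a KKT point of the problem min f(θ) subject to g_k(θ) ≤ 0 for all k, then Tθ* is a KKT point of the problem min f̃(η) subject to g̃_k(η) ≤ 0 for all k. -/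
/-- A KKT point of `min f` subject to `g k ≤ 0`, `k : Fin n` (smooth setting,
gradients in a real Hilbert space). -/
def IsKKTPoint {E : Type*} [NormedAddCommGroup E] [InnerProductSpace ℝ E]
    [CompleteSpace E] {n : ℕ} (f : E → ℝ) (g : Fin n → E → ℝ) (θ : E) : Prop :=
  (∀ k, g k θ ≤ 0) ∧
  ∃ lam : Fin n → ℝ, (∀ k, 0 ≤ lam k) ∧ (∀ k, lam k * g k θ = 0) ∧
    gradient f θ + ∑ k, lam k • gradient (g k) θ = 0

/-- General KKT mapping via a linear transformation (smooth case). -/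
theorem general_kkt_mapping (m l n : ℕ)
    (f : EuclideanSpace ℝ (Fin m) → ℝ) (g : Fin n → EuclideanSpace ℝ (Fin m) → ℝ)
    (ftil : EuclideanSpace ℝ (Fin l) → ℝ)
    (gtil : Fin n → EuclideanSpace ℝ (Fin l) → ℝ)
    (hf : Differentiable ℝ f) (hg : ∀ k, Differentiable ℝ (g k))
    (hftil : Differentiable ℝ ftil) (hgtil : ∀ k, Differentiable ℝ (gtil k))
    (T : EuclideanSpace ℝ (Fin m) →ₗ[ℝ] EuclideanSpace ℝ (Fin l))
    (hconstr : ∀ θ k, gtil k (T θ) = g k θ)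
    (hobj : ∀ θ, gradient ftil (T θ) = T (gradient f θ))
    (hgrad : ∀ k, ∃ t : ℝ, 0 < t ∧
      ∀ θ, gradient (gtil k) (T θ) = t • T (gradient (g k) θ))
    (θstar : EuclideanSpace ℝ (Fin m)) (hKKT : IsKKTPoint f g θstar) :
    IsKKTPoint ftil gtil (T θstar) := by
  obtain ⟨hfeas, lam, hlam0, hcomp, hstat⟩ := hKKT
  choose t ht hgt using hgrad
  refine ⟨fun k => by rw [hconstr]; exact hfeas k, fun k => lam k / t k, ?_, ?_, ?_⟩
  · exact fun k => div_nonneg (hlam0 k) (ht k).le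
  · intro k
    rw [hconstr]
    rw [div_mul_eq_mul_div, hcomp k, zero_div]
  · rw [hobj, ]
    have : ∀ k, (lam k / t k) • gradient (gtil k) (T θstar) = T (lam k • gradient (g k) θstar) := by
      intro k
      rw [hgt k, map_smul, smul_smul, div_mul_cancel₀]
      exact (ht k).ne'
    simp_rw [this]
    rw [← map_sum, ← map_add, hstat, map_zero]
end

section
/- In the setting of the KKT mapping theorem with differentiable functions, if θ* is a KKT point of (P) with multipliers λ_k, then Tθ* is a KKT point of (P̃) with multipliers μ_k = λ_k / t_k, where t_k > 0 are the proportionality constants from the constraint gradient condition ∇g̃_k(Tθ) = t_k·T(∇g_k(θ)). -/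
/-- `θ` is a KKT point with the given multipliers `lam` of `min f` s.t. `g k ≤ 0`. -/
def IsKKTPointWith {E : Type*} [NormedAddCommGroup E] [InnerProductSpace ℝ E]
    [CompleteSpace E] {n : ℕ} (f : E → ℝ) (g : Fin n → E → ℝ)
    (θ : E) (lam : Fin n → ℝ) : Prop :=
  (∀ k, g k θ ≤ 0) ∧ (∀ k, 0 ≤ lam k) ∧ (∀ k, lam k * g k θ = 0) ∧
    gradient f θ + ∑ k, lam k • gradient (g k) θ = 0

/-- In the smooth KKT mapping theorem, if `θ*` is a KKT point of (P)
with multipliers `λ_k`, then `Tθ*` is a KKT point of (P̃) with the explicit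
multipliers `μ_k = λ_k / t_k`. -/
theorem kkt_mapping_multipliers (m l n : ℕ)
    (f : EuclideanSpace ℝ (Fin m) → ℝ) (g : Fin n → EuclideanSpace ℝ (Fin m) → ℝ)
    (ftil : EuclideanSpace ℝ (Fin l) → ℝ)
    (gtil : Fin n → EuclideanSpace ℝ (Fin l) → ℝ)
    (hf : Differentiable ℝ f) (hg : ∀ k, Differentiable ℝ (g k))
    (hftil : Differentiable ℝ ftil) (hgtil : ∀ k, Differentiable ℝ (gtil k))
    (T : EuclideanSpace ℝ (Fin m) →ₗ[ℝ] EuclideanSpace ℝ (Fin l))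
    (hconstr : ∀ θ k, gtil k (T θ) = g k θ)
    (hobj : ∀ θ, gradient ftil (T θ) = T (gradient f θ))
    (t : Fin n → ℝ) (ht : ∀ k, 0 < t k)
    (hgrad : ∀ k θ, gradient (gtil k) (T θ) = t k • T (gradient (g k) θ))
    (θstar : EuclideanSpace ℝ (Fin m)) (lam : Fin n → ℝ)
    (hKKT : IsKKTPointWith f g θstar lam) :
    IsKKTPointWith ftil gtil (T θstar) (fun k => lam k / t k) := by
  obtain ⟨hfeas, hnn, hcs, hstat⟩ := hKKT
  refine ⟨fun k => by rw [hconstr]; exact hfeas k,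
    fun k => div_nonneg (hnn k) (ht k).le,
    fun k => by rw [hconstr]; rw [div_mul_eq_mul_div, hcs k, zero_div], ?_⟩
  have : gradient ftil (T θstar) + ∑ k, (lam k / t k) • gradient (gtil k) (T θstar)
      = T (gradient f θstar + ∑ k, lam k • gradient (g k) θstar) := by
    rw [map_add, map_sum, hobj]
    congr 1
    refine Finset.sum_congr rfl fun k _ => ?_
    rw [hgrad, smul_smul, div_mul_cancel₀ _ (ht k).ne', map_smul]
  rw [this, hstat, map_zero]
end

section
/- Consider the smooth two-layer setting: Φ(a,b;x) = a·σ(bᵀx) with σ differentiable and positively 1-homogeneous, Φ̃ the k-neuron network, and T the splitting map with coefficients cᵢ ≥ 0, ∑cᵢ² = 1. At any point where all relevant derivatives exist (bᵀx ≠ 0), the gradient satisfies ∇_η Φ̃(Tθ; x) = T(∇_θ Φ(θ; x)). -/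
/-!
By positive homogeneity, split neuron `i` sees the pre-activation `cᵢ bᵀx` and outer weight
`cᵢ a`, so `σ(cᵢ bᵀx) = cᵢ σ(bᵀx)` and `σ'(cᵢ bᵀx) = σ'(bᵀx)`: its gradient is `cᵢ` times the
gradient of the original neuron, placed in the `i`-th block of coordinates, which is exactly
what `T` does to a parameter vector.
-/

open RealInnerProductSpace

theorem deriv_mul_eq_of_posHomogeneous {σ : ℝ → ℝ} (hσ : ∀ c > (0 : ℝ), ∀ z, σ (c * z) = c * σ z)
    {c : ℝ} (hc : 0 < c) (s : ℝ) : deriv σ (c * s) = deriv σ s := by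
  have h := deriv_comp_mul_left (f := σ) (c := c) (x := s)
  simp only [hσ c hc, deriv_const_mul_field', smul_eq_mul] at h
  exact (mul_left_cancel₀ hc.ne' h).symm

section Gradient

variable {E : Type*} [NormedAddCommGroup E] [InnerProductSpace ℝ E] [CompleteSpace E]

theorem HasGradientAt.sum {ι : Type*} {s : Finset ι} {f : ι → E → ℝ} {g : ι → E} {x : E}
    (h : ∀ i ∈ s, HasGradientAt (f i) (g i) x) :
    HasGradientAt (fun y => ∑ i ∈ s, f i y) (∑ i ∈ s, g i) x := by
  simp only [hasGradientAt_iff_hasFDerivAt, map_sum] at h ⊢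
  exact HasFDerivAt.fun_sum h

def neuron (σ : ℝ → ℝ) (u w : E) (η : E) : ℝ := ⟪u, η⟫ * σ ⟪w, η⟫

theorem hasGradientAt_neuron {σ : ℝ → ℝ} {u w η : E} (hσ : DifferentiableAt ℝ σ ⟪w, η⟫) :
    HasGradientAt (neuron σ u w) (σ ⟪w, η⟫ • u + (⟪u, η⟫ * deriv σ ⟪w, η⟫) • w) η := by
  rw [hasGradientAt_iff_hasFDerivAt]
  have h := (innerSL ℝ u).hasFDerivAt.mul
    (hσ.hasDerivAt.comp_hasFDerivAt η (innerSL ℝ w).hasFDerivAt)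
  refine h.congr_fderiv ?_
  ext v
  simp
  ring

variable {F : Type*} [NormedAddCommGroup F] [InnerProductSpace ℝ F] [CompleteSpace F]

theorem gradient_sum_neuron_map_eq {κ : Type*} [Fintype κ] {σ : ℝ → ℝ}
    (hσ : ∀ c > (0 : ℝ), ∀ z, σ (c * z) = c * σ z)
    (hσdiff : ∀ z : ℝ, z ≠ 0 → DifferentiableAt ℝ σ z)
    {c : κ → ℝ} (hc : ∀ i, 0 < c i) {u w : E} {U W : κ → F} {T : E →ₗ[ℝ] F}
    (hTu : T u = ∑ i, c i • U i) (hTw : T w = ∑ i, c i • W i) {θ : E}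
    (hUθ : ∀ i, ⟪U i, T θ⟫ = c i * ⟪u, θ⟫) (hWθ : ∀ i, ⟪W i, T θ⟫ = c i * ⟪w, θ⟫)
    (hθ : ⟪w, θ⟫ ≠ 0) :
    gradient (fun η => ∑ i, neuron σ (U i) (W i) η) (T θ) = T (gradient (neuron σ u w) θ) := by
  have hdiff : ∀ i, DifferentiableAt ℝ σ ⟪W i, T θ⟫ := fun i =>
    hσdiff _ (by rw [hWθ]; exact mul_ne_zero (hc i).ne' hθ)
  rw [(HasGradientAt.sum fun i _ => hasGradientAt_neuron (hdiff i)).gradient,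
    (hasGradientAt_neuron (hσdiff _ hθ)).gradient]
  simp only [hUθ, hWθ, hσ _ (hc _), deriv_mul_eq_of_posHomogeneous hσ (hc _), map_add, map_smul,
    hTu, hTw, Finset.smul_sum, smul_smul, ← Finset.sum_add_distrib]
  congr! 3 <;> ring

end Gradient

theorem EuclideanSpace.inner_sum_smul_single {ι κ : Type*} [Fintype ι] [DecidableEq ι] [Fintype κ]
    (Q : κ → ι) (x : κ → ℝ) (η : EuclideanSpace ℝ ι) :
    ⟪∑ j, x j • EuclideanSpace.single (Q j) (1 : ℝ), η⟫ = ∑ j, η (Q j) * x j := by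
  simp [sum_inner, inner_smul_left, EuclideanSpace.inner_single_left, mul_comm]

theorem two_layer_splitting_gradient_preserving_general (d k : ℕ) (σ : ℝ → ℝ)
    (hσ : ∀ c > (0:ℝ), ∀ z : ℝ, σ (c * z) = c * σ z)
    (hσdiff : ∀ z : ℝ, z ≠ 0 → DifferentiableAt ℝ σ z)
    (c : Fin k → ℝ) (hc : ∀ i, 0 < c i)
    (x : Fin d → ℝ)
    (Φ : EuclideanSpace ℝ (Unit ⊕ Fin d) → ℝ)
    (hΦ : ∀ θ, Φ θ = θ (Sum.inl ()) * σ (∑ j, θ (Sum.inr j) * x j))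
    (Φtil : EuclideanSpace ℝ (Fin k ⊕ Fin k × Fin d) → ℝ)
    (hΦtil : ∀ η, Φtil η = ∑ i, η (Sum.inl i) * σ (∑ j, η (Sum.inr (i, j)) * x j))
    (T : EuclideanSpace ℝ (Unit ⊕ Fin d) →ₗ[ℝ]
         EuclideanSpace ℝ (Fin k ⊕ Fin k × Fin d))
    (hT : ∀ θ, (∀ i : Fin k, T θ (Sum.inl i) = c i * θ (Sum.inl ())) ∧
      (∀ (i : Fin k) (j : Fin d), T θ (Sum.inr (i, j)) = c i * θ (Sum.inr j)))
    (θ : EuclideanSpace ℝ (Unit ⊕ Fin d))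
    (hbx : (∑ j, θ (Sum.inr j) * x j) ≠ 0) :
    gradient Φtil (T θ) = T (gradient Φ θ) := by
  open EuclideanSpace in
  -- `⟪u, θ⟫ = a`, `⟪w, θ⟫ = bᵀx`, and `U i`, `W i` read the same off the `i`-th block of `η`.
  set u := single (Sum.inl () : Unit ⊕ Fin d) (1 : ℝ)
  set w := ∑ j, x j • single (Sum.inr j : Unit ⊕ Fin d) (1 : ℝ)
  set U := fun i => single (Sum.inl i : Fin k ⊕ Fin k × Fin d) (1 : ℝ)
  set W := fun i => ∑ j, x j • single (Sum.inr (i, j) : Fin k ⊕ Fin k × Fin d) (1 : ℝ)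
  have hΦ' : Φ = neuron σ u w := by
    funext ϑ; simp [hΦ, neuron, u, w, inner_sum_smul_single, inner_single_left]
  have hΦtil' : Φtil = fun η => ∑ i, neuron σ (U i) (W i) η := by
    funext η; simp [hΦtil, neuron, U, W, inner_sum_smul_single, inner_single_left]
  have hTu : T u = ∑ i, c i • U i := by
    ext (i | ⟨i, j⟩)
    · rw [(hT u).1]; simp [u, U, Pi.single_apply]
    · rw [(hT u).2]; simp [u, U]
  have hTw : T w = ∑ i, c i • W i := by
    ext (i | ⟨i, j⟩)
    · rw [(hT w).1]; simp [w, W]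
    · rw [(hT w).2]; simp [w, W, Pi.single_apply, ite_and]
  rw [hΦ', hΦtil']
  refine gradient_sum_neuron_map_eq hσ hσdiff hc hTu hTw (fun i => ?_) (fun i => ?_) ?_
  · simp [u, U, inner_single_left, (hT θ).1]
  · simp [w, W, inner_sum_smul_single, (hT θ).2, Finset.mul_sum, mul_comm, mul_left_comm]
  · simpa [w, inner_sum_smul_single] using hbx

/-- In the smooth two-layer setting, at points where `bᵀx ≠ 0`
(with all splitting coefficients positive), the gradient of the split network
at `Tθ` equals `T` applied to the gradient of the original network at `θ`. -/
theorem two_layer_splitting_gradient_preserving (d k : ℕ) (σ : ℝ → ℝ)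
    (hσ : ∀ c > (0:ℝ), ∀ z : ℝ, σ (c * z) = c * σ z)
    (hσdiff : ∀ z : ℝ, z ≠ 0 → DifferentiableAt ℝ σ z)
    (c : Fin k → ℝ) (hc : ∀ i, 0 < c i) (hc2 : ∑ i, (c i) ^ 2 = 1)
    (x : Fin d → ℝ)
    (Φ : EuclideanSpace ℝ (Unit ⊕ Fin d) → ℝ)
    (hΦ : ∀ θ, Φ θ = θ (Sum.inl ()) * σ (∑ j, θ (Sum.inr j) * x j))
    (Φtil : EuclideanSpace ℝ (Fin k ⊕ Fin k × Fin d) → ℝ)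
    (hΦtil : ∀ η, Φtil η = ∑ i, η (Sum.inl i) * σ (∑ j, η (Sum.inr (i, j)) * x j))
    (T : EuclideanSpace ℝ (Unit ⊕ Fin d) →ₗ[ℝ]
         EuclideanSpace ℝ (Fin k ⊕ Fin k × Fin d))
    (hT : ∀ θ, (∀ i : Fin k, T θ (Sum.inl i) = c i * θ (Sum.inl ())) ∧
      (∀ (i : Fin k) (j : Fin d), T θ (Sum.inr (i, j)) = c i * θ (Sum.inr j)))
    (θ : EuclideanSpace ℝ (Unit ⊕ Fin d))
    (hbx : (∑ j, θ (Sum.inr j) * x j) ≠ 0) :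
    gradient Φtil (T θ) = T (gradient Φ θ) :=
  two_layer_splitting_gradient_preserving_general d k σ hσ hσdiff c hc x Φ hΦ Φtil hΦtil T hT θ hbx
end
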